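/- arXiv:1712.07863 — 3 statements merged into one kernel-verified Lean document; each statement's English description precedes it below -/
import Mathlib

section
/- Let X_{i,j}, for i = 1,…,L and j = 1,…,k, be real random variables on a common probability space and let a_1,…,a_L > 0 be positive reals. Then for every integer m ≥ 1, H([a_1 X_{1,1},…,a_1 X_{1,k}, a_2 X_{2,1},…,a_L X_{L,k}]_m) ≤ H([X_{1,1},…,X_{L,k}]_m) + k · Σ_{i=1}^L log(⌈a_i⌉ + 1), i.e., the joint entropy of the quantized scaled collection exceeds the joint entropy of the quantized original collection by at most k Σ_i log(⌈a_i⌉ + 1). -/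
open MeasureTheory ProbabilityTheory Filter Set
open scoped ENNReal NNReal

/-- Uniform quantization with step size `1/m`: `[x]_m = ⌊m x⌋ / m`. -/
noncomputable def quant (m : ℕ) (x : ℝ) : ℝ := ⌊(m : ℝ) * x⌋ / m

/-- Shannon entropy (in nats) of a random element `X`, valued in `[0,∞]`. -/
noncomputable def entropy {Ω S : Type*} [MeasurableSpace Ω] (μ : Measure Ω) (X : Ω → S) : ℝ≥0∞ :=
  ∑' s : S, ENNReal.ofReal (Real.negMulLog (μ (X ⁻¹' {s})).toReal)

/-- Gibbs-type inequality: entropy of a finite subdistribution is bounded by the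
entropy of its total mass plus mass times log of the number of parts. -/
lemma aux_gibbs {T : Type*} (F : Finset T) (p : T → ℝ) (hp : ∀ t ∈ F, 0 ≤ p t)
    (N : ℕ) (hcard : F.card ≤ N) :
    ∑ t ∈ F, Real.negMulLog (p t) ≤
      Real.negMulLog (∑ t ∈ F, p t) + (∑ t ∈ F, p t) * Real.log N := by
  set P := ∑ t ∈ F, p t with hP
  have hP0 : 0 ≤ P := Finset.sum_nonneg hp
  rcases hP0.eq_or_lt with h0 | hPpos
  · have hz : ∀ t ∈ F, p t = 0 := (Finset.sum_eq_zero_iff_of_nonneg hp).1 h0.symm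
    have : ∑ t ∈ F, Real.negMulLog (p t) = 0 := by
      apply Finset.sum_eq_zero
      intro t ht; rw [hz t ht, Real.negMulLog_zero]
    rw [this, ← h0]
    simp
  · have hFne : F.Nonempty := by
      by_contra h
      rw [Finset.not_nonempty_iff_eq_empty] at h
      rw [hP, h, Finset.sum_empty] at hPpos
      exact lt_irrefl 0 hPpos
    have hN1 : 1 ≤ N := le_trans (Finset.card_pos.2 hFne) hcard
    have hNpos : (0:ℝ) < N := by exact_mod_cast hN1
    have key : ∀ t ∈ F, Real.negMulLog (p t) ≤
        p t * (-Real.log P) + p t * Real.log N + (P / N - p t) := by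
      intro t ht
      rcases (hp t ht).eq_or_lt with h0t | hpt
      · rw [← h0t, Real.negMulLog_zero]
        have : 0 ≤ P / N := by positivity
        simpa using this
      · have hlog : Real.log (P / (N * p t)) ≤ P / (N * p t) - 1 :=
          Real.log_le_sub_one_of_pos (by positivity)
        have h2 := mul_le_mul_of_nonneg_left hlog (le_of_lt hpt)
        have hexp : p t * Real.log (P / (N * p t))
            = p t * Real.log P - p t * Real.log N - p t * Real.log (p t) := by
          rw [Real.log_div (ne_of_gt hPpos) (by positivity),
            Real.log_mul (ne_of_gt hNpos) (ne_of_gt hpt)]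
          ring
        have hval : p t * (P / (N * p t) - 1) = P / N - p t := by
          field_simp
        rw [hexp, hval] at h2
        rw [Real.negMulLog]
        linarith
    have hsum := Finset.sum_le_sum key
    have h1 : ∑ t ∈ F, (p t * (-Real.log P) + p t * Real.log N + (P / N - p t))
        = P * (-Real.log P) + P * Real.log N + ((F.card : ℝ) * (P / N) - P) := by
      rw [Finset.sum_add_distrib, Finset.sum_add_distrib, Finset.sum_sub_distrib,
        ← Finset.sum_mul, ← Finset.sum_mul, Finset.sum_const, nsmul_eq_mul, ← hP]
    have h2 : (F.card : ℝ) * (P / N) - P ≤ 0 := by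
      have hc : (F.card : ℝ) ≤ N := by exact_mod_cast hcard
      have hPN : 0 ≤ P / N := by positivity
      have := mul_le_mul_of_nonneg_right hc hPN
      have hNP : (N : ℝ) * (P / N) = P := by field_simp
      linarith
    rw [h1] at hsum
    rw [Real.negMulLog]
    linarith

/-- countable subadditivity of `x ↦ ofReal (negMulLog x)` for subprobability vectors. -/
lemma aux_subadd {ι : Type*} (f : ι → ℝ≥0∞) (hf : ∑' i, f i ≤ 1) :
    ENNReal.ofReal (Real.negMulLog (∑' i, f i).toReal)
      ≤ ∑' i, ENNReal.ofReal (Real.negMulLog ((f i).toReal)) := by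
  by_cases hR : ∑' i, ENNReal.ofReal (Real.negMulLog ((f i).toReal)) = ∞
  · rw [hR]; exact le_top
  · have hfi : ∀ i, f i ≤ 1 := fun i => le_trans (ENNReal.le_tsum i) hf
    have hne : ∀ i, f i ≠ ∞ := fun i => ne_top_of_le_ne_top ENNReal.one_ne_top (hfi i)
    set t : ι → ℝ := fun i => (f i).toReal with ht
    have ht0 : ∀ i, 0 ≤ t i := fun i => ENNReal.toReal_nonneg
    have ht1 : ∀ i, t i ≤ 1 := fun i => by
      have := ENNReal.toReal_mono ENNReal.one_ne_top (hfi i)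
      simpa using this
    have hsum_t : Summable t :=
      ENNReal.summable_toReal (ne_top_of_le_ne_top ENNReal.one_ne_top hf)
    have hPt : (∑' i, f i).toReal = ∑' i, t i := ENNReal.tsum_toReal_eq hne
    set P : ℝ := ∑' i, t i with hPdef
    have hP0 : 0 ≤ P := tsum_nonneg ht0
    have hti_le : ∀ i, t i ≤ P := fun i => Summable.le_tsum hsum_t i (fun j _ => ht0 j)
    -- RHS handling
    have hg0 : ∀ i, 0 ≤ Real.negMulLog (t i) := fun i =>
      Real.negMulLog_nonneg (ht0 i) (ht1 i)
    have hgs : Summable (fun i => Real.negMulLog (t i)) := by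
      have := ENNReal.summable_toReal hR
      refine this.congr fun i => ?_
      rw [ENNReal.toReal_ofReal (hg0 i)]
    have hRHS : ∑' i, ENNReal.ofReal (Real.negMulLog (t i))
        = ENNReal.ofReal (∑' i, Real.negMulLog (t i)) :=
      (ENNReal.ofReal_tsum_of_nonneg hg0 hgs).symm
    -- real inequality
    have hreal : Real.negMulLog P ≤ ∑' i, Real.negMulLog (t i) := by
      have hPP : Real.negMulLog P = ∑' i, t i * (-Real.log P) := by
        rw [tsum_mul_right, Real.negMulLog]
        ring
      rw [hPP]
      refine Summable.tsum_le_tsum (fun i => ?_) (hsum_t.mul_right _) hgs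
      rcases (ht0 i).eq_or_lt with h0 | hpos
      · rw [← h0, Real.negMulLog_zero, zero_mul]
      · rw [Real.negMulLog]
        have : Real.log (t i) ≤ Real.log P := Real.log_le_log hpos (hti_le i)
        nlinarith
    rw [hPt, hRHS]
    exact ENNReal.ofReal_le_ofReal hreal

/-- Entropy is invariant under injective post-composition. -/
lemma entropy_comp_inj {Ω U V : Type*} [MeasurableSpace Ω] (μ : Measure Ω)
    (g : U → V) (hg : Function.Injective g) (W : Ω → U) :
    entropy μ (fun ω => g (W ω)) = entropy μ W := by
  unfold entropy
  have h := hg.tsum_eq (f := fun v => ENNReal.ofReal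
      (Real.negMulLog (μ ((fun ω => g (W ω)) ⁻¹' {v})).toReal)) ?_
  · rw [← h]
    refine tsum_congr fun u => ?_
    have : (fun ω => g (W ω)) ⁻¹' {g u} = W ⁻¹' {u} := by
      ext ω; simp [hg.eq_iff]
    rw [this]
  · intro v hv
    by_contra hr
    have hpre : (fun ω => g (W ω)) ⁻¹' {v} = ∅ := by
      ext ω
      simp only [mem_preimage, mem_singleton_iff, mem_empty_iff_false, iff_false]
      intro hgv
      exact hr ⟨W ω, hgv⟩
    apply hv
    simp only [hpre]
    simp

/-- Main abstract bound: if `Y` is always in a finite set `Φ (Q ω)` of size at most `N`,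
then `H(Y) ≤ H(Q) + log N`. -/
lemma entropy_le_of_finite_fibers {Ω S T : Type*} [MeasurableSpace Ω] (μ : Measure Ω)
    [IsProbabilityMeasure μ]
    [MeasurableSpace S] [MeasurableSingletonClass S] [Countable S]
    [MeasurableSpace T] [MeasurableSingletonClass T]
    (Q : Ω → S) (Y : Ω → T) (hQ : Measurable Q) (hY : Measurable Y)
    (Φ : S → Finset T) (hmem : ∀ ω, Y ω ∈ Φ (Q ω)) (N : ℕ)
    (hcard : ∀ s, (Φ s).card ≤ N) :
    entropy μ Y ≤ entropy μ Q + ENNReal.ofReal (Real.log N) := by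
  set ν : S → T → ℝ≥0∞ := fun s t => μ (Q ⁻¹' {s} ∩ Y ⁻¹' {t}) with hν
  have hmeas_st : ∀ s t, MeasurableSet (Q ⁻¹' {s} ∩ Y ⁻¹' {t}) := fun s t =>
    (hQ (measurableSet_singleton s)).inter (hY (measurableSet_singleton t))
  -- Step A
  have hA : ∀ t, μ (Y ⁻¹' {t}) = ∑' s, ν s t := by
    intro t
    have hU : Y ⁻¹' {t} = ⋃ s, (Q ⁻¹' {s} ∩ Y ⁻¹' {t}) := by
      ext ω; simp
    rw [hU, measure_iUnion ?_ (fun s => hmeas_st s t)]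
    intro s s' hss'
    refine Set.disjoint_left.2 fun ω h h' => hss' ?_
    rw [← h.1, ← h'.1]
  -- Step B
  have hB : ∀ s, μ (Q ⁻¹' {s}) = ∑ t ∈ Φ s, ν s t := by
    intro s
    have hU : Q ⁻¹' {s} = ⋃ t ∈ Φ s, (Q ⁻¹' {s} ∩ Y ⁻¹' {t}) := by
      ext ω
      simp only [mem_preimage, mem_singleton_iff, mem_iUnion, mem_inter_iff, exists_prop]
      constructor
      · intro h; exact ⟨Y ω, by rw [← h]; exact hmem ω, h, rfl⟩
      · rintro ⟨t, _, h, _⟩; exact h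
    rw [hU, measure_biUnion_finset ?_ (fun t _ => hmeas_st s t)]
    intro t _ t' _ htt'
    refine Set.disjoint_left.2 fun ω h h' => htt' ?_
    rw [← h.2, ← h'.2]
  -- values are ≤ 1 and ≠ ∞
  have hν1 : ∀ s t, ν s t ≤ 1 := fun s t => prob_le_one
  have hνne : ∀ s t, ν s t ≠ ∞ := fun s t => measure_ne_top μ _
  -- Step C : H(Y) ≤ double sum
  have hC : entropy μ Y ≤ ∑' s, ∑' t, ENNReal.ofReal (Real.negMulLog ((ν s t).toReal)) := by
    rw [← ENNReal.tsum_comm]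
    unfold entropy
    refine ENNReal.tsum_le_tsum fun t => ?_
    have h1 : ∑' s, ν s t ≤ 1 := by rw [← hA t]; exact prob_le_one
    have := aux_subadd (fun s => ν s t) h1
    rw [← hA t] at this
    exact this
  refine le_trans hC ?_
  -- Step D : per-s bound
  have hD : ∀ s, ∑' t, ENNReal.ofReal (Real.negMulLog ((ν s t).toReal))
      ≤ ENNReal.ofReal (Real.negMulLog ((μ (Q ⁻¹' {s})).toReal))
        + μ (Q ⁻¹' {s}) * ENNReal.ofReal (Real.log N) := by
    intro s
    have hzero : ∀ t ∉ Φ s, ENNReal.ofReal (Real.negMulLog ((ν s t).toReal)) = 0 := by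
      intro t ht
      have : Q ⁻¹' {s} ∩ Y ⁻¹' {t} = ∅ := by
        ext ω
        simp only [mem_inter_iff, mem_preimage, mem_singleton_iff, mem_empty_iff_false,
          iff_false, not_and]
        intro hq hy
        exact ht (by rw [← hq, ← hy]; exact hmem ω)
      rw [hν]
      simp [this]
    rw [tsum_eq_sum hzero]
    have hnn : ∀ t ∈ Φ s, 0 ≤ Real.negMulLog ((ν s t).toReal) := fun t _ =>
      Real.negMulLog_nonneg ENNReal.toReal_nonneg
        (by simpa using ENNReal.toReal_mono ENNReal.one_ne_top (hν1 s t))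
    rw [← ENNReal.ofReal_sum_of_nonneg hnn]
    have hPs : (μ (Q ⁻¹' {s})).toReal = ∑ t ∈ Φ s, (ν s t).toReal := by
      rw [hB s, ENNReal.toReal_sum (fun t _ => hνne s t)]
    have hgibbs := aux_gibbs (Φ s) (fun t => (ν s t).toReal)
      (fun t _ => ENNReal.toReal_nonneg) N (hcard s)
    calc ENNReal.ofReal (∑ t ∈ Φ s, Real.negMulLog ((ν s t).toReal))
        ≤ ENNReal.ofReal (Real.negMulLog (∑ t ∈ Φ s, (ν s t).toReal)
            + (∑ t ∈ Φ s, (ν s t).toReal) * Real.log N) :=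
          ENNReal.ofReal_le_ofReal hgibbs
      _ ≤ ENNReal.ofReal (Real.negMulLog (∑ t ∈ Φ s, (ν s t).toReal))
            + ENNReal.ofReal ((∑ t ∈ Φ s, (ν s t).toReal) * Real.log N) :=
          ENNReal.ofReal_add_le
      _ = ENNReal.ofReal (Real.negMulLog ((μ (Q ⁻¹' {s})).toReal))
            + μ (Q ⁻¹' {s}) * ENNReal.ofReal (Real.log N) := by
          rw [← hPs, ENNReal.ofReal_mul (by rw [hPs]; positivity),
            ENNReal.ofReal_toReal (measure_ne_top μ _)]
  refine le_trans (ENNReal.tsum_le_tsum hD) ?_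
  rw [ENNReal.tsum_add]
  unfold entropy
  refine add_le_add le_rfl ?_
  rw [ENNReal.tsum_mul_right]
  have htot : ∑' s, μ (Q ⁻¹' {s}) = 1 := by
    have hU : (⋃ s, Q ⁻¹' {s}) = univ := by ext ω; simp
    rw [← measure_iUnion ?_ (fun s => hQ (measurableSet_singleton s))]
    · rw [hU, measure_univ]
    · intro s s' hss'
      refine Set.disjoint_left.2 fun ω h h' => hss' ?_
      rw [← h, ← h']
  rw [htot, one_mul]

/-- the joint entropy of the quantized scaled collection
`[a_i X_{i,j}]_m` exceeds the joint entropy of the quantized original collection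
by at most `k · Σ_i log(⌈a_i⌉ + 1)`. -/
theorem stmt3 {Ω : Type*} [MeasurableSpace Ω] (μ : Measure Ω) [IsProbabilityMeasure μ]
    (L k : ℕ) (X : Fin L → Fin k → Ω → ℝ) (hmeas : ∀ i j, Measurable (X i j))
    (a : Fin L → ℝ) (ha : ∀ i, 0 < a i) (m : ℕ) (hm : 1 ≤ m) :
    entropy μ (fun ω (i : Fin L) (j : Fin k) => quant m (a i * X i j ω)) ≤
      entropy μ (fun ω (i : Fin L) (j : Fin k) => quant m (X i j ω)) +
        ENNReal.ofReal ((k : ℝ) * ∑ i : Fin L, Real.log ((⌈a i⌉ : ℝ) + 1)) := by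
  have hm0 : (0:ℝ) < m := by exact_mod_cast hm
  -- integer-valued recodings
  set Q : Ω → (Fin L → Fin k → ℤ) := fun ω i j => ⌊(m : ℝ) * X i j ω⌋ with hQdef
  set Y : Ω → (Fin L → Fin k → ℤ) := fun ω i j => ⌊(m : ℝ) * (a i * X i j ω)⌋ with hYdef
  set g : (Fin L → Fin k → ℤ) → (Fin L → Fin k → ℝ) := fun c i j => (c i j : ℝ) / m with hgdef
  have hginj : Function.Injective g := by
    intro c c' h
    funext i j
    have h1 := congrFun (congrFun h i) j
    simp only [hgdef] at h1
    have h2 : (c i j : ℝ) = (c' i j : ℝ) := by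
      field_simp at h1
      exact_mod_cast h1
    exact_mod_cast h2
  have hEY : entropy μ (fun ω (i : Fin L) (j : Fin k) => quant m (a i * X i j ω))
      = entropy μ Y := by
    rw [← entropy_comp_inj μ g hginj Y]
    rfl
  have hEQ : entropy μ (fun ω (i : Fin L) (j : Fin k) => quant m (X i j ω))
      = entropy μ Q := by
    rw [← entropy_comp_inj μ g hginj Q]
    rfl
  rw [hEY, hEQ]
  -- measurability
  have hQm : Measurable Q := by
    refine measurable_pi_lambda _ fun i => measurable_pi_lambda _ fun j => ?_
    exact Int.measurable_floor.comp (measurable_const.mul (hmeas i j))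
  have hYm : Measurable Y := by
    refine measurable_pi_lambda _ fun i => measurable_pi_lambda _ fun j => ?_
    exact Int.measurable_floor.comp (measurable_const.mul (measurable_const.mul (hmeas i j)))
  -- the fiber structure
  set Φ : (Fin L → Fin k → ℤ) → Finset (Fin L → Fin k → ℤ) := fun q =>
    Fintype.piFinset fun i => Fintype.piFinset fun j =>
      Finset.Icc (⌊a i * (q i j : ℝ)⌋) (⌊a i * (q i j : ℝ)⌋ + ⌈a i⌉) with hΦdef
  set N : ℕ := ∏ i : Fin L, (⌈a i⌉ + 1).toNat ^ k with hNdef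
  have hceil : ∀ i, (1:ℤ) ≤ ⌈a i⌉ := fun i => Int.ceil_pos.2 (ha i)
  have hmem : ∀ ω, Y ω ∈ Φ (Q ω) := by
    intro ω
    simp only [hΦdef, Fintype.mem_piFinset, hYdef, hQdef]
    intro i j
    set x := X i j ω with hx
    set n : ℤ := ⌊(m : ℝ) * x⌋ with hn
    have h1 : (n : ℝ) ≤ m * x := Int.floor_le _
    have h2 : (m : ℝ) * x < n + 1 := Int.lt_floor_add_one _
    have hrw : (m : ℝ) * (a i * x) = a i * ((m : ℝ) * x) := by ring
    rw [Finset.mem_Icc]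
    constructor
    · apply Int.floor_le_floor
      rw [hrw]
      exact mul_le_mul_of_nonneg_left h1 (le_of_lt (ha i))
    · have hub : (m : ℝ) * (a i * x) < ((⌊a i * (n : ℝ)⌋ + ⌈a i⌉ + 1 : ℤ) : ℝ) := by
        push_cast
        have hb1 : a i * ((m:ℝ) * x) < a i * ((n:ℝ) + 1) :=
          mul_lt_mul_of_pos_left h2 (ha i)
        have hb2 : a i * ((n:ℝ) + 1) = a i * (n:ℝ) + a i := by ring
        have hb3 : a i * (n:ℝ) < ⌊a i * (n : ℝ)⌋ + 1 := Int.lt_floor_add_one _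
        have hb4 : a i ≤ (⌈a i⌉ : ℝ) := Int.le_ceil _
        rw [hrw]
        linarith
      have := Int.floor_lt.2 hub
      omega
  have hcard : ∀ q, (Φ q).card ≤ N := by
    intro q
    apply le_of_eq
    rw [hΦdef, hNdef, Fintype.card_piFinset]
    refine Finset.prod_congr rfl fun i _ => ?_
    rw [Fintype.card_piFinset]
    have hic : ∀ j : Fin k, (Finset.Icc (⌊a i * (q i j : ℝ)⌋)
        (⌊a i * (q i j : ℝ)⌋ + ⌈a i⌉)).card = (⌈a i⌉ + 1).toNat := by
      intro j
      rw [Int.card_Icc]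
      congr 1
      ring
    rw [Finset.prod_congr rfl (fun j _ => hic j), Finset.prod_const, Finset.card_univ,
      Fintype.card_fin]
  have hmain := entropy_le_of_finite_fibers μ Q Y hQm hYm Φ hmem N hcard
  refine le_trans hmain ?_
  have hNcast : (N : ℝ) = ∏ i : Fin L, ((⌈a i⌉ : ℝ) + 1) ^ k := by
    rw [hNdef, Nat.cast_prod]
    refine Finset.prod_congr rfl fun i _ => ?_
    rw [Nat.cast_pow]
    congr 1
    have h0 : (0:ℤ) ≤ ⌈a i⌉ + 1 := by linarith [hceil i]
    exact_mod_cast Int.toNat_of_nonneg h0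
  have hpos : ∀ i : Fin L, (0:ℝ) < (⌈a i⌉ : ℝ) + 1 := by
    intro i
    have h1 : (1:ℝ) ≤ (⌈a i⌉ : ℝ) := by exact_mod_cast hceil i
    linarith
  have hlogN : Real.log N = (k:ℝ) * ∑ i : Fin L, Real.log ((⌈a i⌉:ℝ)+1) := by
    rw [hNcast, Real.log_prod (fun i _ => ne_of_gt (pow_pos (hpos i) k)),
      Finset.mul_sum]
    refine Finset.sum_congr rfl fun i _ => ?_
    rw [Real.log_pow]
  rw [hlogN]
end

section
/- (Scale invariance of the information dimension rate.) Let {X_t, t ∈ ℤ} be a stationary L-variate real-valued process and let a_1,…,a_L > 0. Define the L-variate process {Y_t} by Y_{i,t} := a_i X_{i,t} for i = 1,…,L and t ∈ ℤ. Then d̄({Y_t}) = d̄({X_t}) and d̲({Y_t}) = d̲({X_t}). -/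
open MeasureTheory ProbabilityTheory Filter Set
open scoped ENNReal NNReal

/-- Componentwise quantization of the block `X_1^k` of an `ι`-variate process. -/
noncomputable def blockQ {Ω ι : Type*} (m k : ℕ) (X : ℤ → Ω → ι → ℝ) :
    Ω → Fin k → ι → ℝ :=
  fun ω j i => quant m (X ((j : ℤ) + 1) ω i)

/-- Entropy rate `H̄_m` of the process quantized with step `1/m`; by stationarity and
subadditivity of entropy, the limit over the block length `k` equals the infimum. -/
noncomputable def entRate {Ω ι : Type*} [MeasurableSpace Ω] (μ : Measure Ω)
    (X : ℤ → Ω → ι → ℝ) (m : ℕ) : ℝ≥0∞ :=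
  ⨅ k : ℕ, entropy μ (blockQ m (k + 1) X) / ((k : ℝ≥0∞) + 1)

/-- Upper information dimension rate `d̄({X_t}) = limsup_m H̄_m / log m`. -/
noncomputable def dimRateUpper {Ω ι : Type*} [MeasurableSpace Ω] (μ : Measure Ω)
    (X : ℤ → Ω → ι → ℝ) : ℝ≥0∞ :=
  Filter.limsup (fun m : ℕ => entRate μ X m / ENNReal.ofReal (Real.log m)) Filter.atTop

/-- Lower information dimension rate `d̲({X_t}) = liminf_m H̄_m / log m`. -/
noncomputable def dimRateLower {Ω ι : Type*} [MeasurableSpace Ω] (μ : Measure Ω)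
    (X : ℤ → Ω → ι → ℝ) : ℝ≥0∞ :=
  Filter.liminf (fun m : ℕ => entRate μ X m / ENNReal.ofReal (Real.log m)) Filter.atTop

/-- Stationarity: every shift of the process has the same (joint) law. -/
def Stationary {Ω ι : Type*} [MeasurableSpace Ω] (μ : Measure Ω) (X : ℤ → Ω → ι → ℝ) : Prop :=
  ∀ n : ℤ, μ.map (fun ω (t : ℤ) => X (t + n) ω) = μ.map (fun ω (t : ℤ) => X t ω)

namespace Stmt4Aux


/-- Subadditivity of `negMulLog` for countable sums of subprobabilities. -/
lemma ofReal_negMulLog_tsum_le {ι : Type*} (q : ι → ℝ≥0∞) (hS : ∑' i, q i ≤ 1) :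
    ENNReal.ofReal (Real.negMulLog (∑' i, q i).toReal) ≤
      ∑' i, ENNReal.ofReal (Real.negMulLog (q i).toReal) := by
  set S := ∑' i, q i with hSdef
  have hSne : S ≠ ∞ := (hS.trans_lt ENNReal.one_lt_top).ne
  have hkey : ENNReal.ofReal (Real.negMulLog S.toReal)
      = ∑' i, q i * ENNReal.ofReal (-Real.log S.toReal) := by
    rw [ENNReal.tsum_mul_right, ← hSdef]
    rw [show Real.negMulLog S.toReal = S.toReal * (-Real.log S.toReal) by
      rw [Real.negMulLog]; ring]
    rw [ENNReal.ofReal_mul ENNReal.toReal_nonneg, ENNReal.ofReal_toReal hSne]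
  rw [hkey]
  refine ENNReal.tsum_le_tsum fun i => ?_
  rcases eq_or_ne (q i) 0 with h0 | h0
  · simp [h0]
  have hqle : q i ≤ S := ENNReal.le_tsum i
  have hqne : q i ≠ ∞ := (hqle.trans_lt hSne.lt_top).ne
  have hqpos : 0 < (q i).toReal := ENNReal.toReal_pos h0 hqne
  have hle : (q i).toReal ≤ S.toReal := ENNReal.toReal_mono hSne hqle
  calc q i * ENNReal.ofReal (-Real.log S.toReal)
      = ENNReal.ofReal ((q i).toReal * (-Real.log S.toReal)) := by
        rw [ENNReal.ofReal_mul ENNReal.toReal_nonneg, ENNReal.ofReal_toReal hqne]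
    _ ≤ ENNReal.ofReal (Real.negMulLog (q i).toReal) := by
        apply ENNReal.ofReal_le_ofReal
        rw [show Real.negMulLog (q i).toReal = (q i).toReal * (-Real.log (q i).toReal) by
          rw [Real.negMulLog]; ring]
        exact mul_le_mul_of_nonneg_left
          (neg_le_neg (Real.log_le_log hqpos hle)) hqpos.le

/-- Finite entropy bound: entropy of a finite subprobability vector is at most
`negMulLog` of the total plus total times log of the cardinality. -/
lemma sum_negMulLog_le {F : Type*} [Fintype F] [Nonempty F] (w : F → ℝ) (hw : ∀ e, 0 ≤ w e) :
    ∑ e, Real.negMulLog (w e) ≤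
      Real.negMulLog (∑ e, w e) + (∑ e, w e) * Real.log (Fintype.card F) := by
  set M : ℝ := (Fintype.card F : ℝ) with hM
  have hM0 : 0 < M := by positivity
  set p : ℝ := ∑ e, w e with hp
  have hp0 : 0 ≤ p := Finset.sum_nonneg fun e _ => hw e
  rcases eq_or_lt_of_le hp0 with hp0' | hp0'
  · have hzero : ∀ e ∈ Finset.univ, w e = 0 := by
      intro e _
      exact le_antisymm (by
        have := Finset.single_le_sum (f := w) (fun e _ => hw e) (Finset.mem_univ e)
        linarith [this]) (hw e)
    have : ∀ e ∈ Finset.univ, Real.negMulLog (w e) = 0 := fun e he => by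
      rw [hzero e he, Real.negMulLog_zero]
    rw [Finset.sum_congr rfl this]
    simp [← hp0', Real.negMulLog_zero]
  · have hjensen := Real.concaveOn_negMulLog.le_map_sum
      (t := Finset.univ) (w := fun _ : F => 1 / M) (p := w)
      (fun e _ => by positivity)
      (by rw [Finset.sum_const, Finset.card_univ, nsmul_eq_mul]; field_simp; exact hM.symm)
      (fun e _ => hw e)
    simp only [smul_eq_mul] at hjensen
    rw [← Finset.mul_sum, ← Finset.mul_sum, ← hp] at hjensen
    have hexp : Real.negMulLog (1 / M * p) = (1 / M) * (Real.negMulLog p + p * Real.log M) := by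
      rw [Real.negMulLog, Real.negMulLog, Real.log_mul (by positivity) hp0'.ne',
        Real.log_div one_ne_zero hM0.ne', Real.log_one]
      ring
    rw [hexp] at hjensen
    have := mul_le_mul_of_nonneg_left hjensen hM0.le
    rw [← mul_assoc, ← mul_assoc, mul_one_div_cancel hM0.ne', one_mul, one_mul] at this
    linarith


variable {Ω : Type*} [MeasurableSpace Ω]

lemma tsum_fiber_le_one {S : Type*} (μ : Measure Ω) [IsProbabilityMeasure μ] (U : Ω → S)
    (hU : ∀ s : S, MeasurableSet (U ⁻¹' {s})) :
    ∑' s : S, μ (U ⁻¹' {s}) ≤ 1 := by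
  rw [ENNReal.tsum_eq_iSup_sum]
  refine iSup_le fun t => ?_
  rw [← measure_biUnion_finset ?_ fun s _ => hU s]
  · exact prob_le_one
  · intro s _ s' _ hss'
    exact Disjoint.preimage U (by simp [hss'])

/-- Data processing for discretely supported maps: entropy decreases under composition. -/
lemma entropy_comp_le {S T : Type*} (μ : Measure Ω) [IsProbabilityMeasure μ]
    (Z : Ω → S) (g : S → T) (D : Set S) (hD : D.Countable)
    (hrange : ∀ ω, Z ω ∈ D) (hZ : ∀ s : S, MeasurableSet (Z ⁻¹' {s})) :
    entropy μ (fun ω => g (Z ω)) ≤ entropy μ Z := by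
  classical
  haveI : Countable D := hD.to_subtype
  set φ : S → ℝ≥0∞ := fun s => ENNReal.ofReal (Real.negMulLog (μ (Z ⁻¹' {s})).toReal) with hφ
  have hsupp : Function.support φ ⊆ D := by
    intro s hs
    by_contra hsD
    have hempty : Z ⁻¹' {s} = ∅ := by
      ext ω; simp only [mem_preimage, mem_singleton_iff, mem_empty_iff_false, iff_false]
      exact fun h => hsD (h ▸ hrange ω)
    simp [hφ, Function.mem_support, hempty] at hs
  have hrestr : entropy μ Z = ∑' s : D, φ (s : S) :=
    (tsum_subtype_eq_of_support_subset hsupp).symm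
  -- sigma decomposition of D along fibers of g
  let e : (Σ t : T, {s : D // g (s : S) = t}) ≃ D :=
    { toFun := fun σ => σ.2.1
      invFun := fun s => ⟨g (s : S), ⟨s, rfl⟩⟩
      left_inv := by rintro ⟨t, s, rfl⟩; rfl
      right_inv := fun s => rfl }
  have hsplit : entropy μ Z = ∑' t : T, ∑' s : {s : D // g (s : S) = t}, φ ((s : D) : S) := by
    rw [hrestr, ← e.tsum_eq (fun s : D => φ (s : S)), ENNReal.tsum_sigma']
    rfl
  rw [hsplit]
  refine ENNReal.tsum_le_tsum fun t => ?_
  -- fiber decomposition of the preimage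
  have hset : (fun ω => g (Z ω)) ⁻¹' {t}
      = ⋃ s : {s : D // g (s : S) = t}, Z ⁻¹' {((s : D) : S)} := by
    ext ω
    simp only [mem_preimage, mem_singleton_iff, mem_iUnion]
    constructor
    · intro h
      exact ⟨⟨⟨Z ω, hrange ω⟩, h⟩, rfl⟩
    · rintro ⟨s, hs⟩
      rw [hs]; exact s.2
  have hmeasure : μ ((fun ω => g (Z ω)) ⁻¹' {t})
      = ∑' s : {s : D // g (s : S) = t}, μ (Z ⁻¹' {((s : D) : S)}) := by
    rw [hset]
    refine measure_iUnion ?_ fun s => hZ _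
    intro s s' hss'
    refine Disjoint.preimage Z ?_
    simp only [disjoint_singleton]
    exact fun h => hss' (Subtype.coe_injective (Subtype.coe_injective h))
  rw [hmeasure]
  exact ofReal_negMulLog_tsum_le _ (by rw [← hmeasure]; exact prob_le_one)

/-- Adding a finite-valued observation increases entropy by at most `log card`. -/
lemma entropy_pair_le {S F : Type*} [Fintype F] [Nonempty F] (μ : Measure Ω)
    [IsProbabilityMeasure μ] (U : Ω → S) (E : Ω → F)
    (hU : ∀ s : S, MeasurableSet (U ⁻¹' {s})) (hE : ∀ e : F, MeasurableSet (E ⁻¹' {e})) :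
    entropy μ (fun ω => (U ω, E ω)) ≤
      entropy μ U + ENNReal.ofReal (Real.log (Fintype.card F)) := by
  classical
  have hpre : ∀ s e, (fun ω => (U ω, E ω)) ⁻¹' {(s, e)} = U ⁻¹' {s} ∩ E ⁻¹' {e} := by
    intro s e; ext ω; simp [Prod.ext_iff]
  have hq : ∀ s : S, μ (U ⁻¹' {s}) = ∑ e : F, μ (U ⁻¹' {s} ∩ E ⁻¹' {e}) := by
    intro s
    have hdis : Pairwise (Function.onFun Disjoint fun e : F => U ⁻¹' {s} ∩ E ⁻¹' {e}) := by
      intro e e' hee'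
      exact Disjoint.mono inter_subset_right inter_subset_right
        (Disjoint.preimage E (by simp [hee']))
    rw [← tsum_fintype (L := SummationFilter.unconditional _), ← measure_iUnion hdis fun e => (hU s).inter (hE e)]
    congr 1
    ext ω; simp
  have hstep : ∀ s : S,
      ∑ e : F, ENNReal.ofReal (Real.negMulLog (μ (U ⁻¹' {s} ∩ E ⁻¹' {e})).toReal)
      ≤ ENNReal.ofReal (Real.negMulLog (μ (U ⁻¹' {s})).toReal)
        + μ (U ⁻¹' {s}) * ENNReal.ofReal (Real.log (Fintype.card F)) := by
    intro s
    set r : F → ℝ≥0∞ := fun e => μ (U ⁻¹' {s} ∩ E ⁻¹' {e}) with hr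
    have hrne : ∀ e, r e ≠ ∞ := fun e => (measure_lt_top μ _).ne
    have hrle1 : ∀ e, (r e).toReal ≤ 1 := by
      intro e
      exact ENNReal.toReal_le_of_le_ofReal zero_le_one (by simpa using prob_le_one)
    have hsum_toReal : ∑ e : F, (r e).toReal = (μ (U ⁻¹' {s})).toReal := by
      rw [hq s, ENNReal.toReal_sum fun e _ => hrne e]
    have hqle1 : (μ (U ⁻¹' {s})).toReal ≤ 1 :=
      ENNReal.toReal_le_of_le_ofReal zero_le_one (by simpa using prob_le_one)
    calc ∑ e : F, ENNReal.ofReal (Real.negMulLog ((r e).toReal))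
        = ENNReal.ofReal (∑ e : F, Real.negMulLog ((r e).toReal)) := by
          rw [ENNReal.ofReal_sum_of_nonneg fun e _ =>
            Real.negMulLog_nonneg ENNReal.toReal_nonneg (hrle1 e)]
      _ ≤ ENNReal.ofReal (Real.negMulLog (∑ e : F, (r e).toReal)
            + (∑ e : F, (r e).toReal) * Real.log (Fintype.card F)) :=
          ENNReal.ofReal_le_ofReal (sum_negMulLog_le _ fun e => ENNReal.toReal_nonneg)
      _ = ENNReal.ofReal (Real.negMulLog ((μ (U ⁻¹' {s})).toReal)
            + (μ (U ⁻¹' {s})).toReal * Real.log (Fintype.card F)) := by rw [hsum_toReal]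
      _ ≤ ENNReal.ofReal (Real.negMulLog ((μ (U ⁻¹' {s})).toReal))
            + ENNReal.ofReal ((μ (U ⁻¹' {s})).toReal * Real.log (Fintype.card F)) :=
          ENNReal.ofReal_add_le
      _ = ENNReal.ofReal (Real.negMulLog ((μ (U ⁻¹' {s})).toReal))
            + μ (U ⁻¹' {s}) * ENNReal.ofReal (Real.log (Fintype.card F)) := by
          rw [ENNReal.ofReal_mul ENNReal.toReal_nonneg,
            ENNReal.ofReal_toReal (measure_lt_top μ _).ne]
  calc entropy μ (fun ω => (U ω, E ω))
      = ∑' s : S, ∑ e : F,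
          ENNReal.ofReal (Real.negMulLog (μ (U ⁻¹' {s} ∩ E ⁻¹' {e})).toReal) := by
        rw [entropy, ENNReal.tsum_prod']
        congr 1; funext s
        rw [tsum_fintype]
        congr 1; funext e
        rw [hpre]
    _ ≤ ∑' s : S, (ENNReal.ofReal (Real.negMulLog (μ (U ⁻¹' {s})).toReal)
          + μ (U ⁻¹' {s}) * ENNReal.ofReal (Real.log (Fintype.card F))) :=
        ENNReal.tsum_le_tsum hstep
    _ = entropy μ U + (∑' s : S, μ (U ⁻¹' {s})) * ENNReal.ofReal (Real.log (Fintype.card F)) := by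
        rw [ENNReal.tsum_add, ENNReal.tsum_mul_right, entropy]
    _ ≤ entropy μ U + 1 * ENNReal.ofReal (Real.log (Fintype.card F)) := by
        gcongr
        exact tsum_fiber_le_one μ U hU
    _ = entropy μ U + ENNReal.ofReal (Real.log (Fintype.card F)) := by rw [one_mul]


/-- Multiplicity bound for the scale `a`. -/
noncomputable def Na {L : ℕ} (a : Fin L → ℝ) : ℕ :=
  (Finset.univ.sup fun i => (⌊a i⌋).toNat) + 2

lemma measurable_quant (m : ℕ) : Measurable (quant m) := by
  have h1 : Measurable fun x : ℝ => ⌊(m : ℝ) * x⌋ :=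
    Int.measurable_floor.comp (measurable_const_mul _)
  exact (measurable_of_countable fun z : ℤ => (z : ℝ) / m).comp h1

/-- KEY LEMMA: scaling a process changes block entropies by at most `k·L·log (Na a)`. -/
lemma entropy_blockQ_mul_le {Ω : Type*} [MeasurableSpace Ω] (μ : Measure Ω)
    [IsProbabilityMeasure μ] {L : ℕ}
    (X : ℤ → Ω → Fin L → ℝ) (hX : ∀ t, Measurable (X t)) (a : Fin L → ℝ) (ha : ∀ i, 0 < a i)
    (m k : ℕ) (hm : m ≠ 0) :
    entropy μ (blockQ m k (fun t ω i => a i * X t ω i)) ≤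
      entropy μ (blockQ m k X) + ((k * L : ℕ) : ℝ≥0∞) * ENNReal.ofReal (Real.log (Na a)) := by
  classical
  have hNa2 : 2 ≤ Na a := by unfold Na; omega
  set F := (Fin k → Fin L → Fin (Na a)) with hF
  haveI : Nonempty (Fin (Na a)) := ⟨⟨0, by omega⟩⟩
  set U : Ω → Fin k → Fin L → ℝ := blockQ m k X with hU
  set gE : Fin L → ℝ → Fin (Na a) := fun i x =>
    ⟨min (⌊(m : ℝ) * (a i * x)⌋ - ⌊a i * (⌊(m : ℝ) * x⌋ : ℝ)⌋).toNat (Na a - 1), by omega⟩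
      with hgE
  set E : Ω → F := fun ω j i => gE i (X ((j : ℤ) + 1) ω i) with hEdef
  set G : (Fin k → Fin L → ℝ) × F → Fin k → Fin L → ℝ := fun p j i =>
    ((⌊a i * ((m : ℝ) * p.1 j i)⌋ : ℝ) + ((p.2 j i : ℕ) : ℝ)) / m with hG
  have hmR : ((m : ℝ)) ≠ 0 := Nat.cast_ne_zero.mpr hm
  -- reconstruction identity
  have hGZ : blockQ m k (fun t ω i => a i * X t ω i) = fun ω => G (U ω, E ω) := by
    funext ω j i
    set x : ℝ := X ((j : ℤ) + 1) ω i with hx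
    set n : ℤ := ⌊(m : ℝ) * x⌋ with hn
    have hUval : (m : ℝ) * U ω j i = (n : ℝ) := by
      show (m : ℝ) * ((n : ℝ) / m) = (n : ℝ)
      field_simp
    have heq : (m : ℝ) * (a i * x) = a i * ((m : ℝ) * x) := by ring
    have h1 : (n : ℝ) ≤ (m : ℝ) * x := Int.floor_le _
    have h2 : (m : ℝ) * x < (n : ℝ) + 1 := Int.lt_floor_add_one _
    have hlb : ⌊a i * (n : ℝ)⌋ ≤ ⌊(m : ℝ) * (a i * x)⌋ := by
      apply Int.floor_le_floor
      rw [heq]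
      exact mul_le_mul_of_nonneg_left h1 (ha i).le
    have hub : ⌊(m : ℝ) * (a i * x)⌋ ≤ ⌊a i * (n : ℝ)⌋ + ⌊a i⌋ + 1 := by
      have hfl1 : a i * (n : ℝ) < (⌊a i * (n : ℝ)⌋ : ℝ) + 1 := Int.lt_floor_add_one _
      have hfl2 : a i < (⌊a i⌋ : ℝ) + 1 := Int.lt_floor_add_one _
      have hstep : (m : ℝ) * (a i * x) < ((⌊a i * (n : ℝ)⌋ + ⌊a i⌋ + 2 : ℤ) : ℝ) := by
        have := mul_lt_mul_of_pos_left h2 (ha i)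
        push_cast
        nlinarith
      have := Int.floor_lt.mpr hstep
      omega
    set e : ℤ := ⌊(m : ℝ) * (a i * x)⌋ - ⌊a i * (n : ℝ)⌋ with he
    have he0 : 0 ≤ e := by omega
    have hsup : (⌊a i⌋).toNat ≤ Finset.univ.sup fun i => (⌊a i⌋).toNat :=
      Finset.le_sup (f := fun i => (⌊a i⌋).toNat) (Finset.mem_univ i)
    have hemin : min e.toNat (Na a - 1) = e.toNat := by
      apply min_eq_left
      unfold Na
      omega
    have hEval : ((E ω j i : ℕ) : ℝ) = (e : ℝ) := by
      show ((min (⌊(m : ℝ) * (a i * x)⌋ - ⌊a i * ((⌊(m : ℝ) * x⌋ : ℤ) : ℝ)⌋).toNat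
        (Na a - 1) : ℕ) : ℝ) = (e : ℝ)
      rw [← hn, ← he, hemin]
      exact_mod_cast Int.toNat_of_nonneg he0
    show quant m (a i * x) = ((⌊a i * ((m : ℝ) * U ω j i)⌋ : ℝ) + ((E ω j i : ℕ) : ℝ)) / m
    rw [hUval, hEval, quant]
    congr 1
    rw [he]
    push_cast
    ring
  -- measurability
  have hUm : Measurable U := by
    apply measurable_pi_lambda
    intro j
    apply measurable_pi_lambda
    intro i
    exact (measurable_quant m).comp ((measurable_pi_apply i).comp (hX _))
  have hgEm : ∀ i, Measurable (gE i) := by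
    intro i
    have hf1 : Measurable fun x : ℝ => ⌊(m : ℝ) * (a i * x)⌋ :=
      Int.measurable_floor.comp (by fun_prop)
    have hf2 : Measurable fun x : ℝ => ⌊a i * (⌊(m : ℝ) * x⌋ : ℝ)⌋ :=
      (measurable_of_countable fun z : ℤ => ⌊a i * (z : ℝ)⌋).comp
        (Int.measurable_floor.comp (by fun_prop))
    have : gE i = (fun p : ℤ × ℤ =>
        (⟨min (p.1 - p.2).toNat (Na a - 1), by omega⟩ : Fin (Na a))) ∘
        fun x => (⌊(m : ℝ) * (a i * x)⌋, ⌊a i * (⌊(m : ℝ) * x⌋ : ℝ)⌋) := rfl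
    rw [this]
    exact (measurable_of_countable _).comp (hf1.prodMk hf2)
  have hEm : Measurable E := by
    apply measurable_pi_lambda
    intro j
    apply measurable_pi_lambda
    intro i
    exact (hgEm i).comp ((measurable_pi_apply i).comp (hX _))
  have hUs : ∀ u, MeasurableSet (U ⁻¹' {u}) := fun u => hUm (measurableSet_singleton u)
  have hEs : ∀ v, MeasurableSet (E ⁻¹' {v}) := fun v => hEm (measurableSet_singleton v)
  have hZm : Measurable fun ω => (U ω, E ω) := hUm.prodMk hEm
  have hZs : ∀ s : (Fin k → Fin L → ℝ) × F,
      MeasurableSet ((fun ω => (U ω, E ω)) ⁻¹' {s}) := by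
    intro s
    apply hZm
    rw [show ({s} : Set ((Fin k → Fin L → ℝ) × F)) = {s.1} ×ˢ {s.2} by
      rw [Set.singleton_prod_singleton]]
    exact (measurableSet_singleton _).prod (measurableSet_singleton _)
  -- countable support
  set Q : Set ℝ := Set.range fun z : ℤ => (z : ℝ) / m with hQ
  set S1 : Set (Fin L → ℝ) := {v | ∀ i, v i ∈ Q} with hS1
  set DU : Set (Fin k → Fin L → ℝ) := {u | ∀ j, u j ∈ S1} with hDU
  have hDUc : DU.Countable :=
    Set.countable_pi fun _ => Set.countable_pi fun _ => Set.countable_range _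
  set D : Set ((Fin k → Fin L → ℝ) × F) := DU ×ˢ (univ : Set F) with hD
  have hDc : D.Countable := hDUc.prod (Set.to_countable _)
  have hrange : ∀ ω, (U ω, E ω) ∈ D := by
    intro ω
    refine ⟨fun j i => ⟨⌊(m : ℝ) * X ((j : ℤ) + 1) ω i⌋, rfl⟩, mem_univ _⟩
  -- chain of inequalities
  rw [hGZ]
  refine le_trans (entropy_comp_le μ (fun ω => (U ω, E ω)) G D hDc hrange hZs) ?_
  refine le_trans (entropy_pair_le μ U E hUs hEs) ?_
  refine add_le_add_right (le_of_eq ?_) _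
  have hcard : Fintype.card F = Na a ^ (L * k) := by
    simp [hF, Fintype.card_fun]
    rw [← pow_mul]
  rw [hcard]
  rw [Nat.cast_pow, Real.log_pow]
  rw [ENNReal.ofReal_mul (by positivity)]
  rw [ENNReal.ofReal_natCast]
  push_cast
  ring

lemma entRate_mul_le {Ω : Type*} [MeasurableSpace Ω] (μ : Measure Ω)
    [IsProbabilityMeasure μ] {L : ℕ}
    (X : ℤ → Ω → Fin L → ℝ) (hX : ∀ t, Measurable (X t)) (a : Fin L → ℝ) (ha : ∀ i, 0 < a i)
    (m : ℕ) (hm : m ≠ 0) :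
    entRate μ (fun t ω i => a i * X t ω i) m ≤
      entRate μ X m + (L : ℝ≥0∞) * ENNReal.ofReal (Real.log (Na a)) := by
  rw [entRate, entRate, ENNReal.iInf_add]
  refine iInf_mono fun k => ?_
  refine le_trans (ENNReal.div_le_div_right
    (entropy_blockQ_mul_le μ X hX a ha m (k + 1) hm) _) ?_
  rw [ENNReal.add_div]
  gcongr entropy μ (blockQ m (k + 1) X) / ((k : ℝ≥0∞) + 1) + ?_
  have hk0 : ((k : ℝ≥0∞) + 1) ≠ 0 := by simp
  have hkt : ((k : ℝ≥0∞) + 1) ≠ ∞ := by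
    exact ENNReal.add_ne_top.mpr ⟨ENNReal.natCast_ne_top k, ENNReal.one_ne_top⟩
  have hcast : (((k + 1) * L : ℕ) : ℝ≥0∞) = ((k : ℝ≥0∞) + 1) * (L : ℝ≥0∞) := by
    push_cast; ring
  rw [hcast, mul_assoc, mul_comm ((k : ℝ≥0∞) + 1), mul_div_assoc,
    ENNReal.div_self hk0 hkt, mul_one]

lemma eventually_div_log_le (c : ℝ≥0∞) (hc : c ≠ ∞) {ε : ℝ≥0∞} (hε : ε ≠ 0) :
    ∀ᶠ m : ℕ in Filter.atTop, c / ENNReal.ofReal (Real.log m) ≤ ε := by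
  rcases eq_or_ne c 0 with rfl | hc0
  · filter_upwards with m
    simp
  rcases eq_or_ne ε ∞ with rfl | hεt
  · filter_upwards with m; exact le_top
  have hcd : c / ε ≠ ∞ := (ENNReal.div_lt_top hc hε).ne
  have hlog : Tendsto (fun m : ℕ => Real.log m) atTop atTop :=
    Real.tendsto_log_atTop.comp tendsto_natCast_atTop_atTop
  filter_upwards [hlog.eventually_ge_atTop ((c / ε).toReal + 1)] with m hm
  have hd : c / ε ≤ ENNReal.ofReal (Real.log m) := by
    calc c / ε = ENNReal.ofReal ((c / ε).toReal) := (ENNReal.ofReal_toReal hcd).symm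
      _ ≤ ENNReal.ofReal (Real.log m) := ENNReal.ofReal_le_ofReal (by linarith)
  have hd0 : ENNReal.ofReal (Real.log m) ≠ 0 := by
    rw [Ne, ENNReal.ofReal_eq_zero, not_le]
    have : (0 : ℝ) ≤ (c / ε).toReal := ENNReal.toReal_nonneg
    linarith
  rw [ENNReal.div_le_iff_le_mul (Or.inl hd0) (Or.inl ENNReal.ofReal_ne_top)]
  calc c = ε * (c / ε) := (ENNReal.mul_div_cancel hε hεt).symm
    _ ≤ ε * ENNReal.ofReal (Real.log m) := mul_le_mul_right hd _

lemma lim_aux (u v : ℕ → ℝ≥0∞)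
    (h : ∀ ε : ℝ≥0∞, ε ≠ 0 → ∀ᶠ m : ℕ in Filter.atTop, u m ≤ v m + ε) :
    Filter.limsup u Filter.atTop ≤ Filter.limsup v Filter.atTop ∧
    Filter.liminf u Filter.atTop ≤ Filter.liminf v Filter.atTop := by
  constructor
  · rcases eq_or_ne (Filter.limsup v Filter.atTop) ∞ with hv | hv
    · rw [hv]; exact le_top
    refine ENNReal.le_of_forall_pos_le_add fun ε hε hlt => ?_
    have hε2 : ((ε : ℝ≥0∞) / 2) ≠ 0 :=
      (ENNReal.div_pos (ENNReal.coe_ne_zero.mpr hε.ne') (by norm_num)).ne'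
    have h1 := h _ hε2
    have h2 : ∀ᶠ m in atTop, v m < Filter.limsup v Filter.atTop + (ε : ℝ≥0∞) / 2 :=
      eventually_lt_of_limsup_lt (ENNReal.lt_add_right hv hε2)
    have h3 : ∀ᶠ m in atTop, u m ≤ Filter.limsup v Filter.atTop + (ε : ℝ≥0∞) := by
      filter_upwards [h1, h2] with m hm1 hm2
      calc u m ≤ v m + (ε : ℝ≥0∞) / 2 := hm1
        _ ≤ (Filter.limsup v Filter.atTop + (ε : ℝ≥0∞) / 2) + (ε : ℝ≥0∞) / 2 :=
          add_le_add_left hm2.le _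
        _ = Filter.limsup v Filter.atTop + (ε : ℝ≥0∞) := by
          rw [add_assoc, ENNReal.add_halves]
    exact limsup_le_of_le (by isBoundedDefault) h3
  · rcases eq_or_ne (Filter.liminf v Filter.atTop) ∞ with hv | hv
    · rw [hv]; exact le_top
    refine ENNReal.le_of_forall_pos_le_add fun ε hε hlt => ?_
    have hε2 : ((ε : ℝ≥0∞) / 2) ≠ 0 :=
      (ENNReal.div_pos (ENNReal.coe_ne_zero.mpr hε.ne') (by norm_num)).ne'
    have h1 := h _ hε2
    have h2 : ∃ᶠ m in atTop, v m < Filter.liminf v Filter.atTop + (ε : ℝ≥0∞) / 2 :=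
      frequently_lt_of_liminf_lt (by isBoundedDefault) (ENNReal.lt_add_right hv hε2)
    have h3 : ∃ᶠ m in atTop, u m ≤ Filter.liminf v Filter.atTop + (ε : ℝ≥0∞) := by
      refine (h2.and_eventually h1).mono ?_
      rintro m ⟨hm2, hm1⟩
      calc u m ≤ v m + (ε : ℝ≥0∞) / 2 := hm1
        _ ≤ (Filter.liminf v Filter.atTop + (ε : ℝ≥0∞) / 2) + (ε : ℝ≥0∞) / 2 :=
          add_le_add_left hm2.le _
        _ = Filter.liminf v Filter.atTop + (ε : ℝ≥0∞) := by
          rw [add_assoc, ENNReal.add_halves]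
    exact liminf_le_of_frequently_le h3 (by isBoundedDefault)


end Stmt4Aux

open Stmt4Aux in
/-- scale invariance: multiplying each component process by a positive
constant leaves the upper and lower information dimension rates unchanged. -/
theorem stmt4 {Ω : Type*} [MeasurableSpace Ω] (μ : Measure Ω) [IsProbabilityMeasure μ]
    (L : ℕ) (X : ℤ → Ω → Fin L → ℝ) (hmeas : ∀ t, Measurable (X t))
    (hstat : Stationary μ X) (a : Fin L → ℝ) (ha : ∀ i, 0 < a i) :
    dimRateUpper μ (fun t ω i => a i * X t ω i) = dimRateUpper μ X ∧
    dimRateLower μ (fun t ω i => a i * X t ω i) = dimRateLower μ X := by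
  set Y : ℤ → Ω → Fin L → ℝ := fun t ω i => a i * X t ω i with hY
  have hYmeas : ∀ t, Measurable (Y t) := fun t =>
    measurable_pi_lambda _ fun i => measurable_const.mul ((measurable_pi_apply i).comp (hmeas t))
  have hainv : ∀ i, 0 < (a i)⁻¹ := fun i => inv_pos.2 (ha i)
  have hXY : (fun t ω i => (a i)⁻¹ * Y t ω i) = X := by
    funext t ω i
    show (a i)⁻¹ * (a i * X t ω i) = X t ω i
    rw [← mul_assoc, inv_mul_cancel₀ (ha i).ne', one_mul]
  set c1 : ℝ≥0∞ := (L : ℝ≥0∞) * ENNReal.ofReal (Real.log (Na a)) with hc1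
  set c2 : ℝ≥0∞ := (L : ℝ≥0∞) * ENNReal.ofReal (Real.log (Na fun i => (a i)⁻¹)) with hc2
  have hc1t : c1 ≠ ∞ := ENNReal.mul_ne_top (ENNReal.natCast_ne_top L) ENNReal.ofReal_ne_top
  have hc2t : c2 ≠ ∞ := ENNReal.mul_ne_top (ENNReal.natCast_ne_top L) ENNReal.ofReal_ne_top
  have key1 : ∀ m : ℕ, m ≠ 0 → entRate μ Y m ≤ entRate μ X m + c1 := fun m hm =>
    entRate_mul_le μ X hmeas a ha m hm
  have key2 : ∀ m : ℕ, m ≠ 0 → entRate μ X m ≤ entRate μ Y m + c2 := fun m hm => by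
    have := entRate_mul_le μ Y hYmeas (fun i => (a i)⁻¹) hainv m hm
    rwa [hXY] at this
  have hcomp : ∀ (u v : ℕ → ℝ≥0∞) (c : ℝ≥0∞), c ≠ ∞ →
      (∀ m : ℕ, m ≠ 0 → u m ≤ v m + c) →
      ∀ ε : ℝ≥0∞, ε ≠ 0 → ∀ᶠ m : ℕ in Filter.atTop,
        u m / ENNReal.ofReal (Real.log m) ≤ v m / ENNReal.ofReal (Real.log m) + ε := by
    intro u v c hct hb ε hε
    filter_upwards [eventually_div_log_le c hct hε, Filter.eventually_ge_atTop 1] with m h1 h2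
    calc u m / ENNReal.ofReal (Real.log m)
        ≤ (v m + c) / ENNReal.ofReal (Real.log m) :=
          ENNReal.div_le_div_right (hb m (by omega)) _
      _ = v m / ENNReal.ofReal (Real.log m) + c / ENNReal.ofReal (Real.log m) :=
          ENNReal.add_div
      _ ≤ v m / ENNReal.ofReal (Real.log m) + ε := add_le_add_right h1 _
  have hYX := lim_aux _ _ (hcomp (entRate μ Y) (entRate μ X) c1 hc1t key1)
  have hXYlim := lim_aux _ _ (hcomp (entRate μ X) (entRate μ Y) c2 hc2t key2)
  exact ⟨le_antisymm hYX.1 hXYlim.1, le_antisymm hYX.2 hXYlim.2⟩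
end

section
/- Let X_{i,j}, for i = 1,…,L and j = 1,…,k, be real random variables on a common probability space and let c_{i,j} be real constants. Then for every integer m ≥ 1, |H([X_{1,1}+c_{1,1},…,X_{L,k}+c_{L,k}]_m) − H([X_{1,1},…,X_{L,k}]_m)| ≤ k·L·log 4, i.e., translating each coordinate by a constant changes the joint entropy of the quantized collection by at most kL log 4. -/
open MeasureTheory ProbabilityTheory Filter Set
open scoped ENNReal NNReal

lemma sum_negMulLog_le {F : Type*} [Fintype F] [Nonempty F] (a : F → ℝ) (ha : ∀ e, 0 ≤ a e) :
    ∑ e, Real.negMulLog (a e) ≤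
      Real.negMulLog (∑ e, a e) + (∑ e, a e) * Real.log (Fintype.card F) := by
  set N : ℕ := Fintype.card F with hNdef
  set s : ℝ := ∑ e, a e with hsdef
  have hN : (1:ℝ) ≤ (N:ℝ) := by exact_mod_cast Nat.one_le_iff_ne_zero.2 Fintype.card_ne_zero
  have hN0 : (0:ℝ) < (N:ℝ) := lt_of_lt_of_le one_pos hN
  have hs0 : 0 ≤ s := Finset.sum_nonneg fun i _ => ha i
  have hse : ∀ e, a e ≤ s := fun e => Finset.single_le_sum (fun i _ => ha i) (Finset.mem_univ e)
  have key : ∀ e, Real.negMulLog (a e) ≤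
      a e * (-Real.log s) + a e * Real.log N + (s / N - a e) := by
    intro e
    rcases eq_or_lt_of_le (ha e) with h0 | h0
    · rw [← h0, Real.negMulLog_zero]
      have : 0 ≤ s / (N:ℝ) := by positivity
      simpa using this
    · have hspos : 0 < s := lt_of_lt_of_le h0 (hse e)
      have hx : 0 < s / ((N:ℝ) * a e) := by positivity
      have hlog : Real.log (s / ((N:ℝ) * a e)) ≤ s / ((N:ℝ) * a e) - 1 :=
        Real.log_le_sub_one_of_pos hx
      have hexp : -Real.log (a e) = Real.log (s / ((N:ℝ) * a e)) - Real.log s + Real.log N := by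
        rw [Real.log_div (ne_of_gt hspos) (by positivity), Real.log_mul (ne_of_gt hN0) (ne_of_gt h0)]
        ring
      have hnm : Real.negMulLog (a e) = a e * (-Real.log (a e)) := by
        simp [Real.negMulLog, mul_comm]
      rw [hnm, hexp]
      have h2 : a e * (Real.log (s / ((N:ℝ) * a e)) - Real.log s + Real.log N) ≤
          a e * ((s / ((N:ℝ) * a e) - 1) - Real.log s + Real.log N) := by
        apply mul_le_mul_of_nonneg_left _ (ha e)
        linarith
      refine h2.trans (le_of_eq ?_)
      field_simp
      ring
  calc ∑ e, Real.negMulLog (a e)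
      ≤ ∑ e, (a e * (-Real.log s) + a e * Real.log N + (s / N - a e)) :=
        Finset.sum_le_sum fun e _ => key e
    _ = s * (-Real.log s) + s * Real.log N + ((N:ℝ) * (s / N) - s) := by
        rw [Finset.sum_add_distrib, Finset.sum_add_distrib, ← Finset.sum_mul, ← Finset.sum_mul,
          Finset.sum_sub_distrib, Finset.sum_const, Finset.card_univ]
        simp [← hsdef, nsmul_eq_mul]
        exact Or.inl hNdef.symm
    _ = Real.negMulLog s + s * Real.log N := by
        rw [Real.negMulLog]
        field_simp
        ring

lemma ofReal_negMulLog_tsum_le {ι : Type*} (f : ι → ℝ≥0∞) (h1 : ∑' i, f i ≤ 1) :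
    ENNReal.ofReal (Real.negMulLog (∑' i, f i).toReal) ≤
      ∑' i, ENNReal.ofReal (Real.negMulLog ((f i).toReal)) := by
  have htop : ∑' i, f i ≠ ∞ := ne_top_of_le_ne_top ENNReal.one_ne_top h1
  have hfi : ∀ i, f i ≠ ∞ := fun i => ne_top_of_le_ne_top htop (ENNReal.le_tsum i)
  set s : ℝ := (∑' i, f i).toReal with hsdef
  have hs0 : 0 ≤ s := ENNReal.toReal_nonneg
  have hs1 : s ≤ 1 := by
    have := ENNReal.toReal_mono ENNReal.one_ne_top h1
    simpa using this
  have hlog : 0 ≤ -Real.log s := neg_nonneg.2 (Real.log_nonpos hs0 hs1)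
  have hsum : Summable (fun i => (f i).toReal) := ENNReal.summable_toReal htop
  have hseq : s = ∑' i, (f i).toReal := ENNReal.tsum_toReal_eq hfi
  have step1 : Real.negMulLog s = ∑' i, (f i).toReal * (-Real.log s) := by
    rw [tsum_mul_right, ← hseq, Real.negMulLog]
    ring
  rw [step1, ENNReal.ofReal_tsum_of_nonneg
    (fun i => mul_nonneg ENNReal.toReal_nonneg hlog) (hsum.mul_right _)]
  refine ENNReal.tsum_le_tsum fun i => ENNReal.ofReal_le_ofReal ?_
  rcases eq_or_lt_of_le (ENNReal.toReal_nonneg : 0 ≤ (f i).toReal) with h0 | h0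
  · simp [← h0, Real.negMulLog_zero]
  · have hle : (f i).toReal ≤ s := ENNReal.toReal_mono htop (ENNReal.le_tsum i)
    have : Real.log (f i).toReal ≤ Real.log s := Real.log_le_log h0 hle
    rw [Real.negMulLog]
    nlinarith

lemma entropy_comp_le {Ω S T F : Type*} [MeasurableSpace Ω] (μ : Measure Ω)
    [IsProbabilityMeasure μ] [Fintype F] [Nonempty F] (Z : Ω → S) (E : Ω → F) (φ : S → F → T)
    (hZ : ∀ s : S, MeasurableSet (Z ⁻¹' {s})) (hE : ∀ e : F, MeasurableSet (E ⁻¹' {e}))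
    (C : Set S) (hC : C.Countable) (hZC : ∀ ω, Z ω ∈ C) :
    entropy μ (fun ω => φ (Z ω) (E ω)) ≤
      entropy μ Z + ENNReal.ofReal (Real.log (Fintype.card F)) := by
  classical
  set P : Ω → S × F := fun ω => (Z ω, E ω) with hPdef
  have hPpre : ∀ z e, P ⁻¹' {(z, e)} = Z ⁻¹' {z} ∩ E ⁻¹' {e} := by
    intro z e; ext ω; simp [hPdef, Prod.ext_iff]
  have hP : ∀ p : S × F, MeasurableSet (P ⁻¹' {p}) := by
    rintro ⟨z, e⟩; rw [hPpre]; exact (hZ z).inter (hE e)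
  set h : S × F → ℝ≥0∞ := fun p => ENNReal.ofReal (Real.negMulLog (μ (P ⁻¹' {p})).toReal)
    with hhdef
  set g : S × F → T := fun p => φ p.1 p.2 with hgdef
  set D : T → Set (S × F) := fun t => {p | g p = t ∧ p.1 ∈ C} with hDdef
  have hDc : ∀ t, (D t).Countable := by
    intro t
    exact Set.Countable.mono (fun p hp => Set.mem_prod.2 ⟨hp.2, Set.mem_univ _⟩)
      (hC.prod Set.countable_univ)
  -- step A : per-t bound
  have stepA : ∀ t : T,
      ENNReal.ofReal (Real.negMulLog (μ ((fun ω => φ (Z ω) (E ω)) ⁻¹' {t})).toReal) ≤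
        ∑' p : D t, h p.val := by
    intro t
    have hU : (fun ω => φ (Z ω) (E ω)) ⁻¹' {t} = ⋃ p ∈ D t, P ⁻¹' {p} := by
      ext ω
      simp only [Set.mem_preimage, Set.mem_singleton_iff, Set.mem_iUnion, hDdef, Set.mem_setOf_eq]
      constructor
      · intro hω; exact ⟨P ω, ⟨hω, hZC ω⟩, rfl⟩
      · rintro ⟨p, ⟨hp1, -⟩, hp3⟩
        rw [← hp1, ← hp3]
    have hdisj : (D t).PairwiseDisjoint (fun p => P ⁻¹' {p}) := by
      intro p _ q _ hpq
      simp only [Function.onFun]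
      rw [Set.disjoint_left]
      intro ω hp hq
      exact hpq (by
        rw [Set.mem_preimage, Set.mem_singleton_iff] at hp hq
        rw [← hp, ← hq])
    have hm : μ ((fun ω => φ (Z ω) (E ω)) ⁻¹' {t}) = ∑' p : D t, μ (P ⁻¹' {p.val}) := by
      rw [hU, measure_biUnion (hDc t) hdisj (fun p _ => hP p)]
    have h1 : ∑' p : D t, μ (P ⁻¹' {p.val}) ≤ 1 := by
      rw [← hm]; exact prob_le_one
    calc ENNReal.ofReal (Real.negMulLog (μ ((fun ω => φ (Z ω) (E ω)) ⁻¹' {t})).toReal)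
        = ENNReal.ofReal (Real.negMulLog (∑' p : D t, μ (P ⁻¹' {p.val})).toReal) := by rw [hm]
      _ ≤ ∑' p : D t, ENNReal.ofReal (Real.negMulLog ((μ (P ⁻¹' {p.val})).toReal)) :=
          ofReal_negMulLog_tsum_le _ h1
      _ = ∑' p : D t, h p.val := rfl
  -- sum over t and reindex
  have stepA' : entropy μ (fun ω => φ (Z ω) (E ω)) ≤ ∑' p : S × F, h p := by
    calc entropy μ (fun ω => φ (Z ω) (E ω))
        ≤ ∑' t : T, ∑' p : D t, h p.val := ENNReal.tsum_le_tsum stepA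
      _ = ∑' x : (Σ t : T, D t), h x.2.val := (ENNReal.tsum_sigma _).symm
      _ ≤ ∑' p : S × F, h p := by
          have hinj : Function.Injective (fun x : (Σ t : T, D t) => x.2.val) := by
            rintro ⟨t1, ⟨p1, h11, h12⟩⟩ ⟨t2, ⟨p2, h21, h22⟩⟩ hpq
            dsimp at hpq
            subst hpq
            have ht : t1 = t2 := h11.symm.trans h21
            subst ht
            rfl
          exact ENNReal.tsum_comp_le_tsum_of_injective hinj h
  refine stepA'.trans ?_
  -- step B
  have hNe : ∀ (z : S), Z ⁻¹' {z} = ⋃ e : F, (Z ⁻¹' {z} ∩ E ⁻¹' {e}) := by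
    intro z; ext ω; simp
  have stepB : ∀ z : S,
      ∑ e : F, h (z, e) ≤
        ENNReal.ofReal (Real.negMulLog (μ (Z ⁻¹' {z})).toReal) +
          μ (Z ⁻¹' {z}) * ENNReal.ofReal (Real.log (Fintype.card F)) := by
    intro z
    set a : F → ℝ := fun e => (μ (Z ⁻¹' {z} ∩ E ⁻¹' {e})).toReal with hadef
    have ha0 : ∀ e, 0 ≤ a e := fun e => ENNReal.toReal_nonneg
    have hsa : ∑ e, a e = (μ (Z ⁻¹' {z})).toReal := by
      rw [hNe z, measure_iUnion ?_ (fun e => (hZ z).inter (hE e))]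
      · rw [tsum_fintype, ENNReal.toReal_sum (fun e _ => measure_ne_top μ _)]
      · intro e1 e2 he
        rw [Function.onFun, Set.disjoint_left]
        rintro ω ⟨-, h1⟩ ⟨-, h2⟩
        rw [Set.mem_preimage, Set.mem_singleton_iff] at h1 h2
        exact he (h1.symm.trans h2)
    have key := sum_negMulLog_le a ha0
    calc ∑ e : F, h (z, e)
        = ∑ e : F, ENNReal.ofReal (Real.negMulLog (a e)) := by
          refine Finset.sum_congr rfl fun e _ => ?_
          rw [hhdef]; dsimp only; rw [hPpre]
      _ = ENNReal.ofReal (∑ e : F, Real.negMulLog (a e)) := by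
          rw [ENNReal.ofReal_sum_of_nonneg]
          intro e _
          exact Real.negMulLog_nonneg (ha0 e)
            (by rw [hadef]; exact ENNReal.toReal_le_of_le_ofReal one_pos.le (by simpa using prob_le_one))
      _ ≤ ENNReal.ofReal (Real.negMulLog (∑ e, a e) + (∑ e, a e) * Real.log (Fintype.card F)) :=
          ENNReal.ofReal_le_ofReal key
      _ ≤ ENNReal.ofReal (Real.negMulLog (∑ e, a e)) +
            ENNReal.ofReal ((∑ e, a e) * Real.log (Fintype.card F)) := ENNReal.ofReal_add_le
      _ = ENNReal.ofReal (Real.negMulLog (μ (Z ⁻¹' {z})).toReal) +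
            μ (Z ⁻¹' {z}) * ENNReal.ofReal (Real.log (Fintype.card F)) := by
          rw [hsa, ENNReal.ofReal_mul ENNReal.toReal_nonneg,
            ENNReal.ofReal_toReal (measure_ne_top μ _)]
  have htot : ∑' z : S, μ (Z ⁻¹' {z}) ≤ 1 := by
    rw [ENNReal.tsum_eq_iSup_sum]
    refine iSup_le fun s => ?_
    rw [← measure_biUnion_finset ?_ (fun z _ => hZ z)]
    · exact prob_le_one
    · intro z1 _ z2 _ hz
      rw [Function.onFun, Set.disjoint_left]
      intro ω h1 h2
      rw [Set.mem_preimage, Set.mem_singleton_iff] at h1 h2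
      exact hz (h1.symm.trans h2)
  calc ∑' p : S × F, h p
      = ∑' z : S, ∑ e : F, h (z, e) := by
        rw [ENNReal.tsum_prod']
        exact tsum_congr fun z => tsum_fintype _
    _ ≤ ∑' z : S, (ENNReal.ofReal (Real.negMulLog (μ (Z ⁻¹' {z})).toReal) +
          μ (Z ⁻¹' {z}) * ENNReal.ofReal (Real.log (Fintype.card F))) :=
        ENNReal.tsum_le_tsum stepB
    _ = entropy μ Z + (∑' z : S, μ (Z ⁻¹' {z})) * ENNReal.ofReal (Real.log (Fintype.card F)) := by
        rw [ENNReal.tsum_add, ENNReal.tsum_mul_right]; rfl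
    _ ≤ entropy μ Z + 1 * ENNReal.ofReal (Real.log (Fintype.card F)) := by
        exact add_le_add_right (mul_le_mul_left htot _) _
    _ = entropy μ Z + ENNReal.ofReal (Real.log (Fintype.card F)) := by rw [one_mul]

lemma floor_add_cases (a b : ℝ) : ⌊a + b⌋ = ⌊a⌋ + ⌊b⌋ ∨ ⌊a + b⌋ = ⌊a⌋ + ⌊b⌋ + 1 := by
  have h1 : ⌊a⌋ + ⌊b⌋ ≤ ⌊a + b⌋ := by
    apply Int.le_floor.2
    push_cast
    exact add_le_add (Int.floor_le a) (Int.floor_le b)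
  have h2 : ⌊a + b⌋ < ⌊a⌋ + ⌊b⌋ + 2 := by
    apply Int.floor_lt.2
    push_cast
    have := Int.lt_floor_add_one a
    have := Int.lt_floor_add_one b
    linarith
  omega

lemma quant_measurable (m : ℕ) : Measurable (quant m) := by
  unfold quant
  exact (measurable_from_top.comp ((measurable_const.mul measurable_id).floor)).div_const _

lemma oneside {Ω : Type*} [MeasurableSpace Ω] (μ : Measure Ω) [IsProbabilityMeasure μ]
    (L k : ℕ) (X : Fin L → Fin k → Ω → ℝ) (hmeas : ∀ i j, Measurable (X i j))
    (c : Fin L → Fin k → ℝ) (m : ℕ) (hm : 1 ≤ m) :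
    entropy μ (fun ω (i : Fin L) (j : Fin k) => quant m (X i j ω + c i j)) ≤
      entropy μ (fun ω (i : Fin L) (j : Fin k) => quant m (X i j ω)) +
        ENNReal.ofReal ((k : ℝ) * L * Real.log 4) := by
  classical
  have hm0 : (0:ℝ) < m := by exact_mod_cast hm
  set Z : Ω → (Fin L → Fin k → ℝ) := fun ω i j => quant m (X i j ω) with hZdef
  set E : Ω → (Fin L → Fin k → Bool) := fun ω i j =>
    decide (⌊(m:ℝ) * (X i j ω + c i j)⌋ = ⌊(m:ℝ) * X i j ω⌋ + ⌊(m:ℝ) * c i j⌋ + 1) with hEdef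
  set φ : (Fin L → Fin k → ℝ) → (Fin L → Fin k → Bool) → (Fin L → Fin k → ℝ) :=
    fun z e i j => z i j + ((⌊(m:ℝ) * c i j⌋ : ℝ) + (if e i j then 1 else 0)) / m with hφdef
  have hfun : (fun ω (i : Fin L) (j : Fin k) => quant m (X i j ω + c i j)) =
      fun ω => φ (Z ω) (E ω) := by
    funext ω i j
    simp only [hφdef, hZdef, hEdef, quant, mul_add]
    rcases floor_add_cases ((m:ℝ) * X i j ω) ((m:ℝ) * c i j) with h | h
    · simp only [decide_eq_true_eq]
      rw [if_neg (show ¬ (⌊(m:ℝ) * X i j ω + (m:ℝ) * c i j⌋ =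
        ⌊(m:ℝ) * X i j ω⌋ + ⌊(m:ℝ) * c i j⌋ + 1) by omega)]
      have h' : ((⌊(m:ℝ) * X i j ω + (m:ℝ) * c i j⌋ : ℤ) : ℝ) =
          ((⌊(m:ℝ) * X i j ω⌋ : ℤ) : ℝ) + ((⌊(m:ℝ) * c i j⌋ : ℤ) : ℝ) := by
        exact_mod_cast congrArg (fun n : ℤ => (n : ℝ)) h
      rw [h']
      ring
    · simp only [decide_eq_true_eq]
      rw [if_pos h]
      have h' : ((⌊(m:ℝ) * X i j ω + (m:ℝ) * c i j⌋ : ℤ) : ℝ) =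
          ((⌊(m:ℝ) * X i j ω⌋ : ℤ) : ℝ) + ((⌊(m:ℝ) * c i j⌋ : ℤ) : ℝ) + 1 := by
        exact_mod_cast congrArg (fun n : ℤ => (n : ℝ)) h
      rw [h']
      ring
  have hZ : ∀ s, MeasurableSet (Z ⁻¹' {s}) := by
    intro s
    have : Z ⁻¹' {s} = ⋂ i, ⋂ j, (fun ω => quant m (X i j ω)) ⁻¹' {s i j} := by
      ext ω
      simp [hZdef, funext_iff]
    rw [this]
    exact MeasurableSet.iInter fun i => MeasurableSet.iInter fun j =>
      ((quant_measurable m).comp (hmeas i j)) (measurableSet_singleton _)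
  have hE : ∀ e, MeasurableSet (E ⁻¹' {e}) := by
    intro e
    have : E ⁻¹' {e} = ⋂ i, ⋂ j, (fun ω => E ω i j) ⁻¹' {e i j} := by
      ext ω
      simp [funext_iff]
    rw [this]
    refine MeasurableSet.iInter fun i => MeasurableSet.iInter fun j => ?_
    have hB : Measurable (fun ω => E ω i j) := by
      have hd : Measurable (fun ω => (⌊(m:ℝ) * (X i j ω + c i j)⌋ - ⌊(m:ℝ) * X i j ω⌋ : ℤ)) :=
        ((measurable_const.mul ((hmeas i j).add_const _)).floor).sub
          ((measurable_const.mul (hmeas i j)).floor)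
      have : (fun ω => E ω i j) = (fun n : ℤ => decide (n = ⌊(m:ℝ) * c i j⌋ + 1)) ∘
          (fun ω => (⌊(m:ℝ) * (X i j ω + c i j)⌋ - ⌊(m:ℝ) * X i j ω⌋ : ℤ)) := by
        funext ω
        simp only [hEdef, Function.comp_apply]
        exact decide_eq_decide.2 (by omega)
      rw [this]
      exact measurable_from_top.comp hd
    exact hB (measurableSet_singleton _)
  have key := entropy_comp_le μ Z E φ hZ hE
    (Set.range (fun (g : Fin L → Fin k → ℤ) i j => (g i j : ℝ) / m))
    (Set.countable_range _)
    (fun ω => ⟨fun i j => ⌊(m:ℝ) * X i j ω⌋, rfl⟩)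
  rw [hfun]
  refine key.trans (add_le_add_right (ENNReal.ofReal_le_ofReal ?_) _)
  have hcard : Fintype.card (Fin L → Fin k → Bool) = 2 ^ (k * L) := by
    simp [Fintype.card_fun, ← pow_mul]
  rw [hcard]
  push_cast
  rw [← Real.rpow_natCast 2 (k*L)]
  rw [Real.log_rpow (by norm_num)]
  have h4 : Real.log 4 = 2 * Real.log 2 := by
    rw [show (4:ℝ) = 2^2 by norm_num, Real.log_pow]
    push_cast; ring
  have hlog2 : 0 ≤ Real.log 2 := Real.log_nonneg (by norm_num)
  rw [h4]
  push_cast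
  nlinarith [mul_nonneg (mul_nonneg (Nat.cast_nonneg k) (Nat.cast_nonneg L)) hlog2]

/-- translating each coordinate by a constant changes the joint entropy of
the quantized collection by at most `k·L·log 4`. -/
theorem stmt5 {Ω : Type*} [MeasurableSpace Ω] (μ : Measure Ω) [IsProbabilityMeasure μ]
    (L k : ℕ) (X : Fin L → Fin k → Ω → ℝ) (hmeas : ∀ i j, Measurable (X i j))
    (c : Fin L → Fin k → ℝ) (m : ℕ) (hm : 1 ≤ m) :
    entropy μ (fun ω (i : Fin L) (j : Fin k) => quant m (X i j ω + c i j)) ≤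
      entropy μ (fun ω (i : Fin L) (j : Fin k) => quant m (X i j ω)) +
        ENNReal.ofReal ((k : ℝ) * L * Real.log 4) ∧
    entropy μ (fun ω (i : Fin L) (j : Fin k) => quant m (X i j ω)) ≤
      entropy μ (fun ω (i : Fin L) (j : Fin k) => quant m (X i j ω + c i j)) +
        ENNReal.ofReal ((k : ℝ) * L * Real.log 4) := by
  refine ⟨oneside μ L k X hmeas c m hm, ?_⟩
  have h2 := oneside μ L k (fun i j ω => X i j ω + c i j)
    (fun i j => (hmeas i j).add_const _) (fun i j => -c i j) m hm
  simpa using h2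
end
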